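/- For all nonnegative integers n and p, the polynomial identity (1+y)^p · w_n^{(p+1)}(y) = (1/p!)·Σ_{k=0}^{p} c(p+1, k+1) · w_{n+k}(y) holds, where c(n,k) are the unsigned Stirling numbers of the first kind and w_n(y) are geometric polynomials. -/
import Mathlib


open Finset

/-- Stirling numbers of the second kind. -/
def stirling2 : ℕ → ℕ → ℕ
  | 0, 0 => 1
  | 0, _+1 => 0
  | _+1, 0 => 0
  | n+1, k+1 => stirling2 n k + (k+1) * stirling2 n (k+1)

/-- Unsigned Stirling numbers of the first kind. -/
def stirling1 : ℕ → ℕ → ℕ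
  | 0, 0 => 1
  | 0, _+1 => 0
  | _+1, 0 => 0
  | n+1, k+1 => stirling1 n k + n * stirling1 n (k+1)

/-- `rstirling2 r n k` is the r-Stirling number of the second kind S_r(n+r, k+r). -/
def rstirling2 (r : ℕ) : ℕ → ℕ → ℕ
  | 0, 0 => 1
  | 0, _+1 => 0
  | n+1, 0 => r * rstirling2 r n 0
  | n+1, k+1 => rstirling2 r n k + (k+1+r) * rstirling2 r n (k+1)

/-- `rstirling1 r n k` is the unsigned r-Stirling number of the first kind c_r(n+r, k+r). -/
def rstirling1 (r : ℕ) : ℕ → ℕ → ℕ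
  | 0, 0 => 1
  | 0, _+1 => 0
  | n+1, 0 => (n+r) * rstirling1 r n 0
  | n+1, k+1 => rstirling1 r n k + (n+r) * rstirling1 r n (k+1)

/-- Rising factorial (Pochhammer symbol) (r)_k = r(r+1)⋯(r+k-1). -/
def risingFactorial (r k : ℕ) : ℕ := ∏ i ∈ Finset.range k, (r + i)

/-- Higher order geometric polynomial w_n^{(r)}(y) = Σ_{k=0}^n S(n,k) (r)_k y^k.
For r = 1 this is the geometric (Fubini) polynomial w_n(y). -/
def geomPoly (r n : ℕ) {R : Type*} [CommRing R] (y : R) : R :=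
  ∑ k ∈ Finset.range (n+1), ((stirling2 n k * risingFactorial r k : ℕ) : R) * y ^ k

lemma stirling2_gt : ∀ n k, n < k → stirling2 n k = 0 := by
  intro n
  induction n with
  | zero => intro k hk; match k, hk with | k+1, _ => rfl
  | succ n ih =>
    intro k hk
    match k, hk with
    | k+1, hk =>
      simp only [stirling2]
      rw [ih k (by omega), ih (k+1) (by omega)]
      simp

lemma stirling1_gt : ∀ n k, n < k → stirling1 n k = 0 := by
  intro n
  induction n with
  | zero => intro k hk; match k, hk with | k+1, _ => rfl
  | succ n ih =>
    intro k hk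
    match k, hk with
    | k+1, hk =>
      simp only [stirling1]
      rw [ih k (by omega), ih (k+1) (by omega)]
      simp

lemma rf_succ (r k : ℕ) : risingFactorial r (k+1) = risingFactorial r k * (r+k) :=
  Finset.prod_range_succ _ _

lemma rf_succ' (r k : ℕ) : risingFactorial r (k+1) = r * risingFactorial (r+1) k := by
  unfold risingFactorial
  rw [Finset.prod_range_succ']
  rw [mul_comm]
  congr 1
  apply Finset.prod_congr rfl
  intros; omega

lemma keyL (p n : ℕ) (y : ℚ) :
    ((p:ℚ)+1) * (1+y) * geomPoly (p+2) n y
      = geomPoly (p+1) (n+1) y + ((p:ℚ)+1) * geomPoly (p+1) n y := by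
  unfold geomPoly
  rw [Finset.sum_range_succ' (fun k => ((stirling2 (n+1) k * risingFactorial (p+1) k : ℕ) : ℚ) * y ^ k)]
  simp only [show stirling2 (n+1) 0 = 0 from rfl, Nat.zero_mul, Nat.cast_zero, zero_mul, add_zero]
  -- shift lemma for the (k+1)*S(n,k+1) part
  have hshift : ∑ k ∈ range (n+1), (((k+1) * stirling2 n (k+1) * risingFactorial (p+1) (k+1) : ℕ):ℚ) * y^(k+1)
      = ∑ k ∈ range (n+1), ((k * stirling2 n k * risingFactorial (p+1) k : ℕ):ℚ) * y^k := by
    have h1 := Finset.sum_range_succ' (fun k => ((k * stirling2 n k * risingFactorial (p+1) k : ℕ):ℚ) * y^k) (n+1)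
    have h2 := Finset.sum_range_succ (fun k => ((k * stirling2 n k * risingFactorial (p+1) k : ℕ):ℚ) * y^k) (n+1)
    simp only [stirling2_gt n (n+1) (by omega)] at h2
    simp only [Nat.zero_mul, Nat.mul_zero, Nat.cast_zero, zero_mul, add_zero, mul_zero] at h1 h2
    rw [← h1, h2]
  calc ((p:ℚ)+1) * (1+y) * ∑ k ∈ range (n+1), ((stirling2 n k * risingFactorial (p+2) k : ℕ):ℚ) * y^k
      = ∑ k ∈ range (n+1), (((stirling2 n k * risingFactorial (p+1) (k+1) : ℕ):ℚ) * y^(k+1)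
          + (((k+1) * stirling2 n (k+1) * risingFactorial (p+1) (k+1) : ℕ):ℚ) * y^(k+1)
          + ((k * stirling2 n k * risingFactorial (p+1) k : ℕ):ℚ) * y^k
          + ((p:ℚ)+1) * (((stirling2 n k * risingFactorial (p+1) k : ℕ):ℚ) * y^k)
          - (((k+1) * stirling2 n (k+1) * risingFactorial (p+1) (k+1) : ℕ):ℚ) * y^(k+1)) := by
        rw [Finset.mul_sum]
        apply Finset.sum_congr rfl
        intro k _
        have e1 : risingFactorial (p+1) (k+1) = (p+1) * risingFactorial (p+2) k := rf_succ' (p+1) k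
        have e2 : risingFactorial (p+1) (k+1) = risingFactorial (p+1) k * (p+1+k) := rf_succ (p+1) k
        have e3 : (p+1) * risingFactorial (p+2) k = risingFactorial (p+1) k * (p+1+k) :=
          (rf_succ' (p+1) k).symm.trans (rf_succ (p+1) k)
        have E3 : ((p:ℚ)+1) * (risingFactorial (p+2) k : ℚ)
            = (risingFactorial (p+1) k : ℚ) * ((p:ℚ)+1+(k:ℚ)) := by exact_mod_cast e3
        have E2 : (risingFactorial (p+1) (k+1) : ℚ)
            = (risingFactorial (p+1) k : ℚ) * ((p:ℚ)+1+(k:ℚ)) := by exact_mod_cast rf_succ (p+1) k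
        push_cast [E2]
        linear_combination ((stirling2 n k : ℚ) * y^k * (1+y)) * E3
    _ = _ := by
        simp only [Finset.sum_add_distrib, Finset.sum_sub_distrib, ← hshift]
        have hAB : (∑ k ∈ range (n+1), ((stirling2 n k * risingFactorial (p+1) (k+1) : ℕ):ℚ) * y^(k+1))
            + ∑ k ∈ range (n+1), (((k+1) * stirling2 n (k+1) * risingFactorial (p+1) (k+1) : ℕ):ℚ) * y^(k+1)
            = ∑ k ∈ range (n+1), ((stirling2 (n+1) (k+1) * risingFactorial (p+1) (k+1) : ℕ):ℚ) * y^(k+1) := by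
          rw [← Finset.sum_add_distrib]
          apply Finset.sum_congr rfl
          intro k _
          simp only [stirling2]
          push_cast
          ring
        rw [Finset.mul_sum]
        linarith [hAB]

lemma mainP (p : ℕ) : ∀ (n : ℕ) (y : ℚ),
    (p.factorial : ℚ) * ((1+y)^p * geomPoly (p+1) n y)
      = ∑ k ∈ Finset.range (p+1), (stirling1 (p+1) (k+1) : ℚ) * geomPoly 1 (n+k) y := by
  induction p with
  | zero =>
    intro n y
    simp [show stirling1 1 1 = 1 from rfl]
  | succ p ih =>
    intro n y
    have key := keyL p n y
    have h1 := ih (n+1) y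
    have h2 := ih n y
    -- RHS manipulation
    have hsplit : ∑ k ∈ Finset.range (p+2), (stirling1 (p+2) (k+1) : ℚ) * geomPoly 1 (n+k) y
        = (∑ k ∈ Finset.range (p+2), (stirling1 (p+1) k : ℚ) * geomPoly 1 (n+k) y)
          + ((p:ℚ)+1) * ∑ k ∈ Finset.range (p+2), (stirling1 (p+1) (k+1) : ℚ) * geomPoly 1 (n+k) y := by
      rw [Finset.mul_sum, ← Finset.sum_add_distrib]
      apply Finset.sum_congr rfl
      intro k _
      simp only [stirling1]
      push_cast
      ring
    have hS1 : ∑ k ∈ Finset.range (p+2), (stirling1 (p+1) k : ℚ) * geomPoly 1 (n+k) y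
        = ∑ k ∈ Finset.range (p+1), (stirling1 (p+1) (k+1) : ℚ) * geomPoly 1 ((n+1)+k) y := by
      rw [Finset.sum_range_succ' (fun k => (stirling1 (p+1) k : ℚ) * geomPoly 1 (n+k) y)]
      simp only [show stirling1 (p+1) 0 = 0 from rfl, Nat.cast_zero, zero_mul, add_zero]
      apply Finset.sum_congr rfl
      intro k _
      congr 2
      omega
    have hS2 : ∑ k ∈ Finset.range (p+2), (stirling1 (p+1) (k+1) : ℚ) * geomPoly 1 (n+k) y
        = ∑ k ∈ Finset.range (p+1), (stirling1 (p+1) (k+1) : ℚ) * geomPoly 1 (n+k) y := by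
      rw [Finset.sum_range_succ]
      simp [stirling1_gt (p+1) (p+2) (by omega)]
    rw [hsplit, hS1, hS2, ← h1, ← h2]
    rw [Nat.factorial_succ]
    push_cast
    linear_combination ((p.factorial : ℚ) * (1+y)^p) * key

theorem stmt_15 (n p : ℕ) (y : ℚ) :
    (1 + y)^p * geomPoly (p+1) n y =
      (1 / (Nat.factorial p : ℚ)) *
        ∑ k ∈ Finset.range (p+1), (stirling1 (p+1) (k+1) : ℚ) * geomPoly 1 (n + k) y := by
  have h := mainP p n y
  have hf : (p.factorial : ℚ) ≠ 0 := Nat.cast_ne_zero.mpr p.factorial_ne_zero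
  field_simp
  linear_combination h
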